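/- arXiv:2005.02864 — 2 statements merged into one kernel-verified Lean document; each statement's English description precedes it below -/
import Mathlib

section
/- The star chromatic index of the complete graph K_n satisfies χ'_st(K_n) ≥ 3n(n−1)/(n+4) for all n ≥ 1. -/
open SimpleGraph

/-- A star edge-coloring with `k` colors: a proper edge-coloring (adjacent edges get distinct
colors) such that no path with four edges and no cycle with four edges is bichromatic. -/
def IsStarEdgeColoring {V : Type*} (G : SimpleGraph V) {k : ℕ} (C : Sym2 V → Fin k) : Prop :=
  (∀ e₁ ∈ G.edgeSet, ∀ e₂ ∈ G.edgeSet, e₁ ≠ e₂ → (∃ v, v ∈ e₁ ∧ v ∈ e₂) → C e₁ ≠ C e₂) ∧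
  (∀ (u v : V) (w : G.Walk u v), w.length = 4 → w.IsPath →
    ¬ ∃ a b : Fin k, ∀ e ∈ w.edges, C e = a ∨ C e = b) ∧
  (∀ (u : V) (w : G.Walk u u), w.length = 4 → w.IsCycle →
    ¬ ∃ a b : Fin k, ∀ e ∈ w.edges, C e = a ∨ C e = b)

/-- The star chromatic index: the least `k` admitting a star edge-coloring with `k` colors. -/
noncomputable def starChromaticIndex {V : Type*} (G : SimpleGraph V) : ℕ :=
  sInf {k | ∃ C : Sym2 V → Fin k, IsStarEdgeColoring G C}

/-!
Every colour class of a star edge-colouring of `K_n` is a matching, so a colour carried by `m_d`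
darts (oriented edges) is missed by exactly `n - m_d` vertices. If `wz` and `yx` are distinct edges
of the same colour, then `x` misses the colour of `zy`: an edge `xt` of that colour would close a
bichromatic path or 4-cycle `w z y x t`. So `((w, z), (y, x)) ↦ (x, (z, y))` maps the
`∑ m_d² - 2 ∑ m_d` ordered pairs of same-coloured darts on distinct edges injectively into the
`∑ (n - m_d) m_d` pairs (vertex, dart) whose vertex misses the colour of the dart, and its image is
disjoint from its reversal `(x, (y, z))`, since `y` misses the colour of `zx` as well. Hence
`3 ∑ m_d² ≤ (n + 4) ∑ m_d`, and Cauchy–Schwarz with `∑ m_d = n (n - 1)` gives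
`3 n (n - 1) ≤ k (n + 4)`.
-/

open Finset

namespace IsStarEdgeColoring

section Local

variable {V : Type*} {G : SimpleGraph V} {k : ℕ} {C : Sym2 V → Fin k}

theorem notMem_of_color_eq (hC : IsStarEdgeColoring G C) {e₁ e₂ : Sym2 V}
    (he₁ : e₁ ∈ G.edgeSet) (he₂ : e₂ ∈ G.edgeSet) (hne : e₁ ≠ e₂) (h : C e₁ = C e₂) {v : V}
    (hv : v ∈ e₁) : v ∉ e₂ :=
  fun hv' => hC.1 e₁ he₁ e₂ he₂ hne ⟨v, hv, hv'⟩ h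

theorem color_ne (hC : IsStarEdgeColoring G C) {a b c : V} (hab : G.Adj a b) (hbc : G.Adj b c)
    (hac : a ≠ c) : C s(a, b) ≠ C s(b, c) := by
  refine fun h => hC.notMem_of_color_eq hab hbc ?_ h (Sym2.mem_mk_right a b) (Sym2.mem_mk_left b c)
  simp [hab.ne, hac]

theorem eq_of_color_eq (hC : IsStarEdgeColoring G C) {a b c : V} (hab : G.Adj a b)
    (hac : G.Adj a c) (h : C s(a, b) = C s(a, c)) : b = c := by
  by_contra hbc
  exact hC.color_ne hab.symm hac hbc (by rwa [Sym2.eq_swap])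

theorem color_ne_of_path (hC : IsStarEdgeColoring G C) {v₀ v₁ v₂ v₃ v₄ : V}
    (h₀₁ : G.Adj v₀ v₁) (h₁₂ : G.Adj v₁ v₂) (h₂₃ : G.Adj v₂ v₃) (h₃₄ : G.Adj v₃ v₄)
    (h₀₂ : v₀ ≠ v₂) (h₀₃ : v₀ ≠ v₃) (h₀₄ : v₀ ≠ v₄) (h₁₃ : v₁ ≠ v₃) (h₁₄ : v₁ ≠ v₄)
    (h₂₄ : v₂ ≠ v₄) (h : C s(v₀, v₁) = C s(v₂, v₃)) : C s(v₁, v₂) ≠ C s(v₃, v₄) := by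
  intro h'
  let w : G.Walk v₀ v₄ := .cons h₀₁ (.cons h₁₂ (.cons h₂₃ (.cons h₃₄ .nil)))
  refine hC.2.1 v₀ v₄ w rfl ?_ ⟨C s(v₀, v₁), C s(v₁, v₂), ?_⟩
  · simp [w, Walk.isPath_def, h₀₁.ne, h₁₂.ne, h₂₃.ne, h₃₄.ne, h₀₂, h₀₃, h₀₄, h₁₃, h₁₄, h₂₄]
  · simp [w, h, h']

theorem color_ne_of_cycle (hC : IsStarEdgeColoring G C) {v₀ v₁ v₂ v₃ : V}
    (h₀₁ : G.Adj v₀ v₁) (h₁₂ : G.Adj v₁ v₂) (h₂₃ : G.Adj v₂ v₃) (h₃₀ : G.Adj v₃ v₀)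
    (h₀₂ : v₀ ≠ v₂) (h₁₃ : v₁ ≠ v₃) (h : C s(v₀, v₁) = C s(v₂, v₃)) :
    C s(v₁, v₂) ≠ C s(v₃, v₀) := by
  intro h'
  let w : G.Walk v₀ v₀ := .cons h₀₁ (.cons h₁₂ (.cons h₂₃ (.cons h₃₀ .nil)))
  refine hC.2.2 v₀ w rfl ?_ ⟨C s(v₀, v₁), C s(v₁, v₂), ?_⟩
  · simp [w, Walk.isCycle_def, Walk.isTrail_def, h₀₁.ne, h₁₂.ne, h₂₃.ne, h₃₀.ne, h₀₂, h₁₃,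
      Ne.symm]
  · simp [w, h, h']

theorem color_ne_middle_of_ends_color_eq (hC : IsStarEdgeColoring G C) {w z y x t : V}
    (hwz : G.Adj w z) (hzy : G.Adj z y) (hyx : G.Adj y x) (hne : s(w, z) ≠ s(y, x))
    (h : C s(w, z) = C s(y, x)) (hxt : G.Adj x t) : C s(x, t) ≠ C s(z, y) := by
  have hdisj {v} (hv : v ∈ s(w, z)) : v ∉ s(y, x) := hC.notMem_of_color_eq hwz hyx hne h hv
  have hwy : w ≠ y := fun e => hdisj (Sym2.mem_mk_left w z) (e ▸ Sym2.mem_mk_left y x)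
  have hwx : w ≠ x := fun e => hdisj (Sym2.mem_mk_left w z) (e ▸ Sym2.mem_mk_right y x)
  have hzx : z ≠ x := fun e => hdisj (Sym2.mem_mk_right w z) (e ▸ Sym2.mem_mk_right y x)
  rcases eq_or_ne t y with rfl | hty
  · rw [Sym2.eq_swap, ← h]
    exact hC.color_ne hwz hzy hwy
  rcases eq_or_ne t z with rfl | htz
  · exact hC.color_ne hxt hzy hyx.ne.symm
  rcases eq_or_ne t w with rfl | htw
  · exact (hC.color_ne_of_cycle hwz hzy hyx hxt hwy hzx h ·.symm)
  · exact (hC.color_ne_of_path hwz hzy hyx hxt hwy hwx htw.symm hzx htz.symm hty.symm h ·.symm)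

theorem of_injective (hC : Function.Injective C) : IsStarEdgeColoring G C := by
  have hbi {l : List (Sym2 V)} (hl : l.Nodup) (hlen : l.length = 4) :
      ¬ ∃ a b : Fin k, ∀ e ∈ l, C e = a ∨ C e = b := by
    rintro ⟨a, b, hab⟩
    have hsub : (l.map C).Subperm [a, b] := (hl.map hC).subperm fun c hc => by
      obtain ⟨e, he, rfl⟩ := List.mem_map.1 hc
      simpa using hab e he
    have := hsub.length_le
    simp only [List.length_map, hlen, List.length_cons, List.length_nil] at this
    omega
  refine ⟨fun e₁ _ e₂ _ hne _ h => hne (hC h), ?_, ?_⟩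
  · intro u v w hlen hw
    exact hbi hw.isTrail.edges_nodup (by rw [Walk.length_edges, hlen])
  · intro u w hlen hw
    exact hbi hw.isTrail.edges_nodup (by rw [Walk.length_edges, hlen])

end Local

section Complete

variable {V : Type*} [Fintype V] {k : ℕ}

def colorDarts (C : Sym2 V → Fin k) (d : Fin k) : Finset (V × V) :=
  {p ∈ univ.offDiag | C s(p.1, p.2) = d}

theorem sum_card_colorDarts (C : Sym2 V → Fin k) :
    ∑ d, #(colorDarts C d) = #(univ : Finset V).offDiag :=
  (card_eq_sum_card_fiberwise fun _ _ => mem_univ _).symm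

theorem sum_card_colorDarts_mul_self (C : Sym2 V → Fin k) :
    ∑ d, #(colorDarts C d) * #(colorDarts C d) =
      ∑ p ∈ univ.offDiag, #(colorDarts C (C s(p.1, p.2))) := by
  rw [← sum_fiberwise univ.offDiag (fun p => C s(p.1, p.2))]
  refine sum_congr rfl fun d _ => ?_
  rw [sum_congr rfl fun p hp => by rw [(mem_filter.1 hp).2], sum_const, smul_eq_mul]
  rfl

variable [DecidableEq V]

def sameColorPairs (C : Sym2 V → Fin k) : Finset ((V × V) × (V × V)) :=
  {pq ∈ univ.offDiag ×ˢ univ.offDiag |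
    C s(pq.1.1, pq.1.2) = C s(pq.2.1, pq.2.2) ∧ s(pq.1.1, pq.1.2) ≠ s(pq.2.1, pq.2.2)}

def missingPairs (C : Sym2 V → Fin k) : Finset (V × (V × V)) :=
  {xp ∈ univ ×ˢ univ.offDiag | ∀ t ≠ xp.1, C s(xp.1, t) ≠ C s(xp.2.1, xp.2.2)}

theorem card_sameColorPairs_add (C : Sym2 V → Fin k) :
    #(sameColorPairs C) + 2 * #(univ : Finset V).offDiag =
      ∑ p ∈ univ.offDiag, #(colorDarts C (C s(p.1, p.2))) := by
  have hfiber (p : V × V) (hp : p ∈ univ.offDiag) :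
      #{q ∈ univ.offDiag | C s(p.1, p.2) = C s(q.1, q.2) ∧ s(p.1, p.2) ≠ s(q.1, q.2)} + 2 =
        #(colorDarts C (C s(p.1, p.2))) := by
    have hp' : p.1 ≠ p.2 := (mem_offDiag.1 hp).2.2
    have hsame :
        {q ∈ colorDarts C (C s(p.1, p.2)) | s(p.1, p.2) = s(q.1, q.2)} = {p, p.swap} := by
      ext q
      simp only [colorDarts, mem_filter, mem_offDiag, mem_univ, true_and, Sym2.mk_eq_mk_iff,
        mem_insert, mem_singleton]
      constructor
      · rintro ⟨-, rfl | rfl⟩ <;> simp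
      · rintro (rfl | rfl) <;> simp [hp', hp'.symm, Sym2.eq_swap]
    rw [← card_filter_add_card_filter_not (s := colorDarts C (C s(p.1, p.2)))
      (p := fun q => s(p.1, p.2) = s(q.1, q.2)), hsame,
      card_pair fun h => hp' (congrArg Prod.fst h), add_comm]
    simp only [colorDarts, filter_filter, eq_comm]
  have hsplit : #(sameColorPairs C) = ∑ p ∈ univ.offDiag,
      #{q ∈ univ.offDiag | C s(p.1, p.2) = C s(q.1, q.2) ∧ s(p.1, p.2) ≠ s(q.1, q.2)} := by
    simp only [sameColorPairs, card_filter, sum_product]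
  rw [hsplit, ← sum_congr rfl hfiber, sum_add_distrib, sum_const, smul_eq_mul, mul_comm]

variable {C : Sym2 V → Fin k}

theorem card_missing_add_card_colorDarts (hC : IsStarEdgeColoring (completeGraph V) C) (d : Fin k) :
    #{x | ∀ t ≠ x, C s(x, t) ≠ d} + #(colorDarts C d) = Fintype.card V := by
  have hcovered :
      (colorDarts C d).image Prod.fst = ({x | ¬ ∀ t ≠ x, C s(x, t) ≠ d} : Finset V) := by
    ext x
    simp [colorDarts, eq_comm (a := x)]
  have hinj : Set.InjOn Prod.fst (colorDarts C d : Set (V × V)) := by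
    rintro ⟨a, b⟩ hab ⟨a', b'⟩ hab' (rfl : a = a')
    simp only [colorDarts, coe_filter, mem_offDiag, mem_univ, true_and, Set.mem_ofPred_eq]
      at hab hab'
    rw [hC.eq_of_color_eq hab.1 hab'.1 (hab.2.trans hab'.2.symm)]
  rw [← card_image_of_injOn hinj, hcovered, card_filter_add_card_filter_not, card_univ]

theorem card_missingPairs_add (hC : IsStarEdgeColoring (completeGraph V) C) :
    #(missingPairs C) + ∑ p ∈ univ.offDiag, #(colorDarts C (C s(p.1, p.2))) =
      Fintype.card V * #(univ : Finset V).offDiag := by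
  have hsplit : #(missingPairs C) =
      ∑ p ∈ univ.offDiag, #{x | ∀ t ≠ x, C s(x, t) ≠ C s(p.1, p.2)} := by
    simp only [missingPairs, card_filter, sum_product_right]
  rw [hsplit, ← sum_add_distrib, sum_congr rfl fun p _ => hC.card_missing_add_card_colorDarts _, sum_const,
    smul_eq_mul, mul_comm]

theorem mem_sameColorPairs {w z y x : V} :
    ((w, z), (y, x)) ∈ sameColorPairs C ↔
      (w ≠ z ∧ y ≠ x) ∧ C s(w, z) = C s(y, x) ∧ s(w, z) ≠ s(y, x) := by
  simp [sameColorPairs]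

theorem mem_missingPairs {x z y : V} :
    (x, (z, y)) ∈ missingPairs C ↔ z ≠ y ∧ ∀ t ≠ x, C s(x, t) ≠ C s(z, y) := by
  simp [missingPairs]

theorem mem_missingPairs_of_mem_sameColorPairs (hC : IsStarEdgeColoring (completeGraph V) C)
    {w z y x : V} (h : ((w, z), (y, x)) ∈ sameColorPairs C) : (x, (z, y)) ∈ missingPairs C := by
  obtain ⟨⟨hwz, hyx⟩, hcol, hne⟩ := mem_sameColorPairs.1 h
  have hzy : z ≠ y := fun e =>
    hC.notMem_of_color_eq hwz hyx hne hcol (Sym2.mem_mk_right w z) (e ▸ Sym2.mem_mk_left y x)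
  exact mem_missingPairs.2
    ⟨hzy, fun t ht => hC.color_ne_middle_of_ends_color_eq hwz hzy hyx hne hcol ht.symm⟩

theorem eq_of_mem_sameColorPairs (hC : IsStarEdgeColoring (completeGraph V) C)
    {w w' z y x : V} (h : ((w, z), (y, x)) ∈ sameColorPairs C)
    (h' : ((w', z), (y, x)) ∈ sameColorPairs C) : w = w' := by
  obtain ⟨⟨hwz, -⟩, hcol, -⟩ := mem_sameColorPairs.1 h
  obtain ⟨⟨hw'z, -⟩, hcol', -⟩ := mem_sameColorPairs.1 h'
  have hzw : C s(z, w) = C s(z, w') := by rw [Sym2.eq_swap, hcol, ← hcol', Sym2.eq_swap]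
  exact hC.eq_of_color_eq (G := completeGraph V) hwz.symm hw'z.symm hzw

theorem notMem_sameColorPairs_of_mem (hC : IsStarEdgeColoring (completeGraph V) C)
    {w z y x : V} (h : ((w, z), (y, x)) ∈ sameColorPairs C) (w' : V) :
    ((w', y), (z, x)) ∉ sameColorPairs C := by
  intro h'
  obtain ⟨⟨hwz, hyx⟩, hcol, hne⟩ := mem_sameColorPairs.1 h
  have hrev : ((w, z), (x, y)) ∈ sameColorPairs C := by
    rw [mem_sameColorPairs, Sym2.eq_swap (a := x)]
    exact ⟨⟨hwz, hyx.symm⟩, hcol, hne⟩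
  obtain ⟨⟨hw'y, -⟩, hcol', -⟩ := mem_sameColorPairs.1 h'
  exact (mem_missingPairs.1 (hC.mem_missingPairs_of_mem_sameColorPairs hrev)).2 w' hw'y
    (by rwa [Sym2.eq_swap])

theorem two_mul_card_sameColorPairs_le (hC : IsStarEdgeColoring (completeGraph V) C) :
    2 * #(sameColorPairs C) ≤ #(missingPairs C) := by
  set ψ : (V × V) × (V × V) → V × (V × V) := fun pq => (pq.2.2, (pq.1.2, pq.2.1))
  set σ : V × (V × V) → V × (V × V) := Prod.map id Prod.swap
  have hσ : Function.Injective σ := Function.Involutive.injective fun _ => rfl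
  have hψ : Set.InjOn ψ (sameColorPairs C) := by
    rintro ⟨⟨w, z⟩, y, x⟩ h ⟨⟨w', z'⟩, y', x'⟩ h' he
    simp only [ψ, Prod.mk.injEq] at he
    obtain ⟨rfl, rfl, rfl⟩ := he
    rw [hC.eq_of_mem_sameColorPairs h h']
  have hdisj : Disjoint ((sameColorPairs C).image ψ) (((sameColorPairs C).image ψ).image σ) := by
    rw [Finset.disjoint_left]
    intro _ h₁ h₂
    simp only [mem_image] at h₁ h₂
    obtain ⟨⟨⟨w, z⟩, y, x⟩, h, rfl⟩ := h₁
    obtain ⟨_, ⟨⟨⟨w', z'⟩, y', x'⟩, h', rfl⟩, he⟩ := h₂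
    simp only [ψ, σ, Prod.map, id, Prod.swap, Prod.mk.injEq] at he
    obtain ⟨hx, hy, hz⟩ := he
    subst x' y' z'
    exact hC.notMem_sameColorPairs_of_mem h w' h'
  have hsub : (sameColorPairs C).image ψ ∪ ((sameColorPairs C).image ψ).image σ ⊆
      missingPairs C := by
    refine union_subset ?_ ?_ <;> intro xp <;> simp only [mem_image]
    · rintro ⟨⟨⟨w, z⟩, y, x⟩, h, rfl⟩
      exact hC.mem_missingPairs_of_mem_sameColorPairs h
    · rintro ⟨_, ⟨⟨⟨w, z⟩, y, x⟩, h, rfl⟩, rfl⟩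
      have := mem_missingPairs.1 (hC.mem_missingPairs_of_mem_sameColorPairs h)
      show (x, (y, z)) ∈ missingPairs C
      exact mem_missingPairs.2 ⟨this.1.symm, by simpa only [Sym2.eq_swap (a := y)] using this.2⟩
  calc 2 * #(sameColorPairs C)
      = #((sameColorPairs C).image ψ) + #(((sameColorPairs C).image ψ).image σ) := by
        rw [card_image_of_injective _ hσ, card_image_of_injOn hψ, two_mul]
    _ = #((sameColorPairs C).image ψ ∪ ((sameColorPairs C).image ψ).image σ) :=
        (card_union_of_disjoint hdisj).symm
    _ ≤ #(missingPairs C) := card_le_card hsub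

theorem three_mul_card_offDiag_le (hC : IsStarEdgeColoring (completeGraph V) C) :
    3 * #(univ : Finset V).offDiag ≤ k * (Fintype.card V + 4) := by
  have hQ := card_sameColorPairs_add C
  have hR := hC.card_missingPairs_add
  have hle := hC.two_mul_card_sameColorPairs_le
  have hCS := sq_sum_le_card_mul_sum_sq (s := univ) (f := fun d => #(colorDarts C d))
  simp only [sq, sum_card_colorDarts, card_univ, Fintype.card_fin, Nat.cast_id,
    sum_card_colorDarts_mul_self] at hCS
  set A := #(univ : Finset V).offDiag
  set S := ∑ p ∈ univ.offDiag, #(colorDarts C (C s(p.1, p.2)))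
  have hS : 3 * S ≤ (Fintype.card V + 4) * A := by
    rw [add_mul]
    omega
  rcases A.eq_zero_or_pos with hA | hA
  · simp [hA]
  refine Nat.le_of_mul_le_mul_right ?_ hA
  calc 3 * A * A ≤ 3 * (k * S) := by rw [mul_assoc]; exact Nat.mul_le_mul_left 3 hCS
    _ = k * (3 * S) := by ring
    _ ≤ k * ((Fintype.card V + 4) * A) := by gcongr
    _ = k * (Fintype.card V + 4) * A := by ring

end Complete

end IsStarEdgeColoring

theorem exists_isStarEdgeColoring_starChromaticIndex {V : Type*} [Finite V] (G : SimpleGraph V) :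
    ∃ C : Sym2 V → Fin (starChromaticIndex G), IsStarEdgeColoring G C :=
  Nat.sInf_mem (s := {k | ∃ C : Sym2 V → Fin k, IsStarEdgeColoring G C})
    ⟨_, _, .of_injective (Finite.equivFin (Sym2 V)).injective⟩

theorem stmt_4_general (n : ℕ) :
    (3 * n * (n - 1) / (n + 4) : ℚ) ≤ starChromaticIndex (completeGraph (Fin n)) := by
  obtain ⟨C, hC⟩ := exists_isStarEdgeColoring_starChromaticIndex (completeGraph (Fin n))
  have h := hC.three_mul_card_offDiag_le
  rw [offDiag_card, card_univ, Fintype.card_fin] at h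
  have hq := (Nat.cast_le (α := ℚ)).2 h
  push_cast [Nat.cast_sub (Nat.le_mul_self n)] at hq
  rw [div_le_iff₀ (by positivity)]
  linarith

theorem stmt_4 (n : ℕ) (hn : 1 ≤ n) :
    (3 * n * (n - 1) / (n + 4) : ℚ) ≤ starChromaticIndex (completeGraph (Fin n)) :=
  stmt_4_general n
end

section
/- The star chromatic index of the 3-prism C_3 □ P_2 (the Cartesian product of a triangle and an edge, i.e., the triangular prism) equals 6. -/
open SimpleGraph

abbrev V6 := Fin 3 × Fin 2
abbrev G6 := cycleGraph 3 □ pathGraph 2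

abbrev v00 : V6 := (0,0)
abbrev v01 : V6 := (0,1)
abbrev v10 : V6 := (1,0)
abbrev v11 : V6 := (1,1)
abbrev v20 : V6 := (2,0)
abbrev v21 : V6 := (2,1)

instance : DecidableRel (pathGraph 2).Adj := fun _ _ => decidable_of_iff _ pathGraph_adj.symm
instance : DecidableRel G6.Adj := fun _ _ => decidable_of_iff _ boxProd_adj.symm

/-- reduce star-coloring verification to finite vertex-tuple conditions -/
lemma isStar_of_finite {k : ℕ} (C : Sym2 V6 → Fin k)
    (h1 : ∀ x y z : V6, G6.Adj x y → G6.Adj x z → y ≠ z → C s(x,y) ≠ C s(x,z))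
    (h2 : ∀ p0 p1 p2 p3 p4 : V6, G6.Adj p0 p1 → G6.Adj p1 p2 → G6.Adj p2 p3 → G6.Adj p3 p4 →
      ([p0,p1,p2,p3,p4] : List V6).Nodup →
      ¬ ∃ a b : Fin k, ∀ e ∈ [s(p0,p1),s(p1,p2),s(p2,p3),s(p3,p4)], C e = a ∨ C e = b)
    (h3 : ∀ p0 p1 p2 p3 : V6, G6.Adj p0 p1 → G6.Adj p1 p2 → G6.Adj p2 p3 → G6.Adj p3 p0 →
      ([p0,p1,p2,p3] : List V6).Nodup →
      ¬ ∃ a b : Fin k, ∀ e ∈ [s(p0,p1),s(p1,p2),s(p2,p3),s(p3,p0)], C e = a ∨ C e = b) :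
    IsStarEdgeColoring G6 C := by
  refine ⟨?_, ?_, ?_⟩
  · rintro e₁ he₁ e₂ he₂ hne ⟨v, hv₁, hv₂⟩
    obtain ⟨a, rfl⟩ := Sym2.mem_iff_exists.mp hv₁
    obtain ⟨b, rfl⟩ := Sym2.mem_iff_exists.mp hv₂
    exact h1 v a b (G6.mem_edgeSet.mp he₁) (G6.mem_edgeSet.mp he₂)
      (fun h => hne (by rw [h]))
  · intro u v w hl hp
    cases w with
    | nil => simp at hl
    | cons a1 w1 => cases w1 with
      | nil => simp at hl
      | cons a2 w2 => cases w2 with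
        | nil => simp at hl
        | cons a3 w3 => cases w3 with
          | nil => simp at hl
          | cons a4 w4 => cases w4 with
            | cons a5 w5 => simp [Walk.length_cons] at hl
            | nil =>
              rw [Walk.isPath_def] at hp
              simp only [Walk.support_cons, Walk.support_nil] at hp
              have := h2 _ _ _ _ _ a1 a2 a3 a4 hp
              simpa only [Walk.edges_cons, Walk.edges_nil] using this
  · intro u w hl hc
    cases w with
    | nil => simp at hl
    | cons a1 w1 => cases w1 with
      | nil => simp at hl
      | cons a2 w2 => cases w2 with
        | nil => simp at hl
        | cons a3 w3 => cases w3 with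
          | nil => simp at hl
          | cons a4 w4 => cases w4 with
            | cons a5 w5 => simp [Walk.length_cons] at hl
            | nil =>
              have hn := hc.2
              simp only [Walk.support_cons, Walk.support_nil, List.tail_cons] at hn
              intro hex
              refine h3 _ _ _ _ a1 a2 a3 a4 ?_ ?_
              · exact (List.perm_append_singleton _ _).nodup hn
              · simpa only [Walk.edges_cons, Walk.edges_nil] using hex

/-- bichromatic (≤ 2 colors) for four values iff every triple has a repetition -/
lemma bi_iff (x y z w : Fin 5) :
    (∃ a b : Fin 5, (x = a ∨ x = b) ∧ (y = a ∨ y = b) ∧ (z = a ∨ z = b) ∧ (w = a ∨ w = b)) ↔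
    ((x = y ∨ x = z ∨ y = z) ∧ (x = y ∨ x = w ∨ y = w) ∧
     (x = z ∨ x = w ∨ z = w) ∧ (y = z ∨ y = w ∨ z = w)) := by revert x y z w; decide

lemma not_bi_of_walk {k : ℕ} (D : Sym2 V6 → Fin k) (x y z w : Sym2 V6)
    (h : ¬ ∃ a b : Fin k, ∀ e ∈ [x,y,z,w], D e = a ∨ D e = b) :
    ¬ ∃ a b : Fin k, (D x = a ∨ D x = b) ∧ (D y = a ∨ D y = b) ∧
      (D z = a ∨ D z = b) ∧ (D w = a ∨ D w = b) := by
  rintro ⟨a, b, h1, h2, h3, h4⟩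
  refine h ⟨a, b, ?_⟩
  intro e he
  simp only [List.mem_cons, List.not_mem_nil, or_false] at he
  rcases he with rfl|rfl|rfl|rfl <;> assumption

lemma pullback {α : Type*} {k m : ℕ} (f : Fin k → Fin m) (hf : Function.Injective f)
    (C : α → Fin k) (l : List α) (hl : l ≠ [])
    (h : ∃ a b, ∀ e ∈ l, f (C e) = a ∨ f (C e) = b) :
    ∃ a b, ∀ e ∈ l, C e = a ∨ C e = b := by
  obtain ⟨a, b, hab⟩ := h
  obtain ⟨e0, he0⟩ := List.exists_mem_of_ne_nil l hl
  by_cases h2 : ∃ e1 ∈ l, C e1 ≠ C e0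
  · obtain ⟨e1, he1, hne⟩ := h2
    refine ⟨C e0, C e1, fun e he => ?_⟩
    have E0 := hab e0 he0
    have E1 := hab e1 he1
    have Ee := hab e he
    rcases E0 with h0|h0 <;> rcases E1 with h1|h1 <;> rcases Ee with h|h <;>
      first
        | (exact absurd (hf (h1.trans h0.symm)) hne)
        | (exact Or.inl (hf (h.trans h0.symm)))
        | (exact Or.inr (hf (h.trans h1.symm)))
  · push_neg at h2
    exact ⟨C e0, C e0, fun e he => Or.inl (h2 e he)⟩

lemma star_map {V : Type*} (G : SimpleGraph V) {k m : ℕ} (C : Sym2 V → Fin k)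
    (f : Fin k → Fin m) (hf : Function.Injective f) (h : IsStarEdgeColoring G C) :
    IsStarEdgeColoring G (fun e => f (C e)) := by
  refine ⟨?_, ?_, ?_⟩
  · intro e₁ he₁ e₂ he₂ hne hv hEq
    exact h.1 e₁ he₁ e₂ he₂ hne hv (hf hEq)
  · intro u v w hl hp hex
    refine h.2.1 u v w hl hp (pullback f hf C w.edges ?_ hex)
    intro hnil
    have := w.length_edges
    rw [hnil, hl] at this
    simp at this
  · intro u w hl hc hex
    refine h.2.2 u w hl hc (pullback f hf C w.edges ?_ hex)
    intro hnil
    have := w.length_edges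
    rw [hnil, hl] at this
    simp at this

lemma perm3 (x y z : Fin 5) (hxy : x ≠ y) (hxz : x ≠ z) (hyz : y ≠ z) :
    ∃ f : Fin 5 → Fin 5, Function.Injective f ∧ f x = 0 ∧ f y = 1 ∧ f z = 2 := by
  set s1 := Equiv.swap x 0 with hs1d
  set a := s1 y with had
  set b := s1 z with hbd
  have h1x : s1 x = 0 := Equiv.swap_apply_left x 0
  have ha0 : a ≠ 0 := by rw [← h1x]; exact fun h => hxy (s1.injective h).symm
  have hb0 : b ≠ 0 := by rw [← h1x]; exact fun h => hxz (s1.injective h).symm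
  have hab : a ≠ b := fun h => hyz (s1.injective h)
  set s2 := Equiv.swap a 1 with hs2d
  have h2a : s2 a = 1 := Equiv.swap_apply_left a 1
  have h20 : s2 0 = 0 := Equiv.swap_apply_of_ne_of_ne (Ne.symm ha0) (by decide)
  set c := s2 b with hcd
  have hc0 : c ≠ 0 := by rw [← h20]; exact fun h => hb0 (s2.injective h)
  have hc1 : c ≠ 1 := by rw [← h2a]; exact fun h => hab (s2.injective h).symm
  set s3 := Equiv.swap c 2 with hs3d
  refine ⟨fun w => s3 (s2 (s1 w)), ?_, ?_, ?_, ?_⟩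
  · exact fun u v h => s1.injective (s2.injective (s3.injective h))
  · show s3 (s2 (s1 x)) = 0
    rw [h1x, h20]; exact Equiv.swap_apply_of_ne_of_ne (Ne.symm hc0) (by decide)
  · show s3 (s2 (s1 y)) = 1
    rw [h2a]; exact Equiv.swap_apply_of_ne_of_ne (Ne.symm hc1) (by decide)
  · show s3 (s2 (s1 z)) = 2
    exact Equiv.swap_apply_left c 2

set_option maxHeartbeats 16000000 in
set_option maxRecDepth 100000 in
set_option synthInstance.maxSize 4000 in
set_option synthInstance.maxHeartbeats 2000000 in
lemma unsat : ∀ d0 d3 d4 d5 d7 d8 : Fin 5,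
    ¬((d0 ≠ (0 : Fin 5)) ∧
    (d0 ≠ (2 : Fin 5)) ∧
    (d0 ≠ d3) ∧
    (d0 ≠ d4) ∧
    ((0 : Fin 5) ≠ (2 : Fin 5)) ∧
    ((0 : Fin 5) ≠ d5) ∧
    ((0 : Fin 5) ≠ (1 : Fin 5)) ∧
    ((2 : Fin 5) ≠ (1 : Fin 5)) ∧
    ((2 : Fin 5) ≠ d8) ∧
    (d3 ≠ d4) ∧
    (d3 ≠ d5) ∧
    (d3 ≠ d7) ∧
    (d4 ≠ d7) ∧
    (d4 ≠ d8) ∧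
    (d5 ≠ (1 : Fin 5)) ∧
    (d5 ≠ d7) ∧
    ((1 : Fin 5) ≠ d8) ∧
    (d7 ≠ d8) ∧
    (¬((d0 = d3 ∨ d0 = d5 ∨ d3 = d5) ∧ (d0 = d3 ∨ d0 = (1 : Fin 5) ∨ d3 = (1 : Fin 5)) ∧ (d0 = d5 ∨ d0 = (1 : Fin 5) ∨ d5 = (1 : Fin 5)) ∧ (d3 = d5 ∨ d3 = (1 : Fin 5) ∨ d5 = (1 : Fin 5)))) ∧
    (¬((d0 = d3 ∨ d0 = d7 ∨ d3 = d7) ∧ (d0 = d3 ∨ d0 = d8 ∨ d3 = d8) ∧ (d0 = d7 ∨ d0 = d8 ∨ d7 = d8) ∧ (d3 = d7 ∨ d3 = d8 ∨ d7 = d8))) ∧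
    (¬((d0 = d4 ∨ d0 = d7 ∨ d4 = d7) ∧ (d0 = d4 ∨ d0 = d5 ∨ d4 = d5) ∧ (d0 = d7 ∨ d0 = d5 ∨ d7 = d5) ∧ (d4 = d7 ∨ d4 = d5 ∨ d7 = d5))) ∧
    (¬((d0 = d4 ∨ d0 = d8 ∨ d4 = d8) ∧ (d0 = d4 ∨ d0 = (1 : Fin 5) ∨ d4 = (1 : Fin 5)) ∧ (d0 = d8 ∨ d0 = (1 : Fin 5) ∨ d8 = (1 : Fin 5)) ∧ (d4 = d8 ∨ d4 = (1 : Fin 5) ∨ d8 = (1 : Fin 5)))) ∧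
    (¬(((0 : Fin 5) = d5 ∨ (0 : Fin 5) = d3 ∨ d5 = d3) ∧ ((0 : Fin 5) = d5 ∨ (0 : Fin 5) = d4 ∨ d5 = d4) ∧ ((0 : Fin 5) = d3 ∨ (0 : Fin 5) = d4 ∨ d3 = d4) ∧ (d5 = d3 ∨ d5 = d4 ∨ d3 = d4))) ∧
    (¬(((0 : Fin 5) = d5 ∨ (0 : Fin 5) = d7 ∨ d5 = d7) ∧ ((0 : Fin 5) = d5 ∨ (0 : Fin 5) = d4 ∨ d5 = d4) ∧ ((0 : Fin 5) = d7 ∨ (0 : Fin 5) = d4 ∨ d7 = d4) ∧ (d5 = d7 ∨ d5 = d4 ∨ d7 = d4))) ∧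
    (¬(((0 : Fin 5) = d5 ∨ (0 : Fin 5) = d7 ∨ d5 = d7) ∧ ((0 : Fin 5) = d5 ∨ (0 : Fin 5) = d8 ∨ d5 = d8) ∧ ((0 : Fin 5) = d7 ∨ (0 : Fin 5) = d8 ∨ d7 = d8) ∧ (d5 = d7 ∨ d5 = d8 ∨ d7 = d8))) ∧
    (¬(((0 : Fin 5) = (1 : Fin 5) ∨ (0 : Fin 5) = d8 ∨ (1 : Fin 5) = d8) ∧ ((0 : Fin 5) = (1 : Fin 5) ∨ (0 : Fin 5) = d4 ∨ (1 : Fin 5) = d4) ∧ ((0 : Fin 5) = d8 ∨ (0 : Fin 5) = d4 ∨ d8 = d4) ∧ ((1 : Fin 5) = d8 ∨ (1 : Fin 5) = d4 ∨ d8 = d4))) ∧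
    (¬(((0 : Fin 5) = (1 : Fin 5) ∨ (0 : Fin 5) = d8 ∨ (1 : Fin 5) = d8) ∧ ((0 : Fin 5) = (1 : Fin 5) ∨ (0 : Fin 5) = d7 ∨ (1 : Fin 5) = d7) ∧ ((0 : Fin 5) = d8 ∨ (0 : Fin 5) = d7 ∨ d8 = d7) ∧ ((1 : Fin 5) = d8 ∨ (1 : Fin 5) = d7 ∨ d8 = d7))) ∧
    (¬(((2 : Fin 5) = (1 : Fin 5) ∨ (2 : Fin 5) = d5 ∨ (1 : Fin 5) = d5) ∧ ((2 : Fin 5) = (1 : Fin 5) ∨ (2 : Fin 5) = d3 ∨ (1 : Fin 5) = d3) ∧ ((2 : Fin 5) = d5 ∨ (2 : Fin 5) = d3 ∨ d5 = d3) ∧ ((1 : Fin 5) = d5 ∨ (1 : Fin 5) = d3 ∨ d5 = d3))) ∧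
    (¬(((2 : Fin 5) = (1 : Fin 5) ∨ (2 : Fin 5) = d5 ∨ (1 : Fin 5) = d5) ∧ ((2 : Fin 5) = (1 : Fin 5) ∨ (2 : Fin 5) = d7 ∨ (1 : Fin 5) = d7) ∧ ((2 : Fin 5) = d5 ∨ (2 : Fin 5) = d7 ∨ d5 = d7) ∧ ((1 : Fin 5) = d5 ∨ (1 : Fin 5) = d7 ∨ d5 = d7))) ∧
    (¬(((2 : Fin 5) = d8 ∨ (2 : Fin 5) = d4 ∨ d8 = d4) ∧ ((2 : Fin 5) = d8 ∨ (2 : Fin 5) = d3 ∨ d8 = d3) ∧ ((2 : Fin 5) = d4 ∨ (2 : Fin 5) = d3 ∨ d4 = d3) ∧ (d8 = d4 ∨ d8 = d3 ∨ d4 = d3))) ∧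
    (¬(((2 : Fin 5) = d8 ∨ (2 : Fin 5) = d7 ∨ d8 = d7) ∧ ((2 : Fin 5) = d8 ∨ (2 : Fin 5) = d3 ∨ d8 = d3) ∧ ((2 : Fin 5) = d7 ∨ (2 : Fin 5) = d3 ∨ d7 = d3) ∧ (d8 = d7 ∨ d8 = d3 ∨ d7 = d3))) ∧
    (¬(((2 : Fin 5) = d8 ∨ (2 : Fin 5) = d7 ∨ d8 = d7) ∧ ((2 : Fin 5) = d8 ∨ (2 : Fin 5) = d5 ∨ d8 = d5) ∧ ((2 : Fin 5) = d7 ∨ (2 : Fin 5) = d5 ∨ d7 = d5) ∧ (d8 = d7 ∨ d8 = d5 ∨ d7 = d5))) ∧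
    (¬((d0 = (0 : Fin 5) ∨ d0 = d5 ∨ (0 : Fin 5) = d5) ∧ (d0 = (0 : Fin 5) ∨ d0 = d7 ∨ (0 : Fin 5) = d7) ∧ (d0 = d5 ∨ d0 = d7 ∨ d5 = d7) ∧ ((0 : Fin 5) = d5 ∨ (0 : Fin 5) = d7 ∨ d5 = d7))) ∧
    (¬((d0 = (0 : Fin 5) ∨ d0 = (1 : Fin 5) ∨ (0 : Fin 5) = (1 : Fin 5)) ∧ (d0 = (0 : Fin 5) ∨ d0 = d8 ∨ (0 : Fin 5) = d8) ∧ (d0 = (1 : Fin 5) ∨ d0 = d8 ∨ (1 : Fin 5) = d8) ∧ ((0 : Fin 5) = (1 : Fin 5) ∨ (0 : Fin 5) = d8 ∨ (1 : Fin 5) = d8))) ∧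
    (¬((d0 = (2 : Fin 5) ∨ d0 = (1 : Fin 5) ∨ (2 : Fin 5) = (1 : Fin 5)) ∧ (d0 = (2 : Fin 5) ∨ d0 = d5 ∨ (2 : Fin 5) = d5) ∧ (d0 = (1 : Fin 5) ∨ d0 = d5 ∨ (1 : Fin 5) = d5) ∧ ((2 : Fin 5) = (1 : Fin 5) ∨ (2 : Fin 5) = d5 ∨ (1 : Fin 5) = d5))) ∧
    (¬((d0 = (2 : Fin 5) ∨ d0 = d8 ∨ (2 : Fin 5) = d8) ∧ (d0 = (2 : Fin 5) ∨ d0 = d7 ∨ (2 : Fin 5) = d7) ∧ (d0 = d8 ∨ d0 = d7 ∨ d8 = d7) ∧ ((2 : Fin 5) = d8 ∨ (2 : Fin 5) = d7 ∨ d8 = d7))) ∧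
    (¬((d3 = d5 ∨ d3 = (0 : Fin 5) ∨ d5 = (0 : Fin 5)) ∧ (d3 = d5 ∨ d3 = (2 : Fin 5) ∨ d5 = (2 : Fin 5)) ∧ (d3 = (0 : Fin 5) ∨ d3 = (2 : Fin 5) ∨ (0 : Fin 5) = (2 : Fin 5)) ∧ (d5 = (0 : Fin 5) ∨ d5 = (2 : Fin 5) ∨ (0 : Fin 5) = (2 : Fin 5)))) ∧
    (¬((d3 = d5 ∨ d3 = (1 : Fin 5) ∨ d5 = (1 : Fin 5)) ∧ (d3 = d5 ∨ d3 = d8 ∨ d5 = d8) ∧ (d3 = (1 : Fin 5) ∨ d3 = d8 ∨ (1 : Fin 5) = d8) ∧ (d5 = (1 : Fin 5) ∨ d5 = d8 ∨ (1 : Fin 5) = d8))) ∧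
    (¬((d3 = d7 ∨ d3 = d8 ∨ d7 = d8) ∧ (d3 = d7 ∨ d3 = (1 : Fin 5) ∨ d7 = (1 : Fin 5)) ∧ (d3 = d8 ∨ d3 = (1 : Fin 5) ∨ d8 = (1 : Fin 5)) ∧ (d7 = d8 ∨ d7 = (1 : Fin 5) ∨ d8 = (1 : Fin 5)))) ∧
    (¬((d4 = d7 ∨ d4 = d5 ∨ d7 = d5) ∧ (d4 = d7 ∨ d4 = (1 : Fin 5) ∨ d7 = (1 : Fin 5)) ∧ (d4 = d5 ∨ d4 = (1 : Fin 5) ∨ d5 = (1 : Fin 5)) ∧ (d7 = d5 ∨ d7 = (1 : Fin 5) ∨ d5 = (1 : Fin 5)))) ∧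
    (¬((d4 = d8 ∨ d4 = (2 : Fin 5) ∨ d8 = (2 : Fin 5)) ∧ (d4 = d8 ∨ d4 = (0 : Fin 5) ∨ d8 = (0 : Fin 5)) ∧ (d4 = (2 : Fin 5) ∨ d4 = (0 : Fin 5) ∨ (2 : Fin 5) = (0 : Fin 5)) ∧ (d8 = (2 : Fin 5) ∨ d8 = (0 : Fin 5) ∨ (2 : Fin 5) = (0 : Fin 5)))) ∧
    (¬((d4 = d8 ∨ d4 = (1 : Fin 5) ∨ d8 = (1 : Fin 5)) ∧ (d4 = d8 ∨ d4 = d5 ∨ d8 = d5) ∧ (d4 = (1 : Fin 5) ∨ d4 = d5 ∨ (1 : Fin 5) = d5) ∧ (d8 = (1 : Fin 5) ∨ d8 = d5 ∨ (1 : Fin 5) = d5))) ∧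
    (¬(((0 : Fin 5) = d0 ∨ (0 : Fin 5) = d3 ∨ d0 = d3) ∧ ((0 : Fin 5) = d0 ∨ (0 : Fin 5) = d7 ∨ d0 = d7) ∧ ((0 : Fin 5) = d3 ∨ (0 : Fin 5) = d7 ∨ d3 = d7) ∧ (d0 = d3 ∨ d0 = d7 ∨ d3 = d7))) ∧
    (¬(((0 : Fin 5) = d0 ∨ (0 : Fin 5) = d4 ∨ d0 = d4) ∧ ((0 : Fin 5) = d0 ∨ (0 : Fin 5) = d7 ∨ d0 = d7) ∧ ((0 : Fin 5) = d4 ∨ (0 : Fin 5) = d7 ∨ d4 = d7) ∧ (d0 = d4 ∨ d0 = d7 ∨ d4 = d7))) ∧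
    (¬(((0 : Fin 5) = d0 ∨ (0 : Fin 5) = d4 ∨ d0 = d4) ∧ ((0 : Fin 5) = d0 ∨ (0 : Fin 5) = d8 ∨ d0 = d8) ∧ ((0 : Fin 5) = d4 ∨ (0 : Fin 5) = d8 ∨ d4 = d8) ∧ (d0 = d4 ∨ d0 = d8 ∨ d4 = d8))) ∧
    (¬(((0 : Fin 5) = (2 : Fin 5) ∨ (0 : Fin 5) = d8 ∨ (2 : Fin 5) = d8) ∧ ((0 : Fin 5) = (2 : Fin 5) ∨ (0 : Fin 5) = d7 ∨ (2 : Fin 5) = d7) ∧ ((0 : Fin 5) = d8 ∨ (0 : Fin 5) = d7 ∨ d8 = d7) ∧ ((2 : Fin 5) = d8 ∨ (2 : Fin 5) = d7 ∨ d8 = d7))) ∧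
    (¬((d5 = d3 ∨ d5 = d0 ∨ d3 = d0) ∧ (d5 = d3 ∨ d5 = (2 : Fin 5) ∨ d3 = (2 : Fin 5)) ∧ (d5 = d0 ∨ d5 = (2 : Fin 5) ∨ d0 = (2 : Fin 5)) ∧ (d3 = d0 ∨ d3 = (2 : Fin 5) ∨ d0 = (2 : Fin 5)))) ∧
    (¬((d5 = d3 ∨ d5 = d4 ∨ d3 = d4) ∧ (d5 = d3 ∨ d5 = d8 ∨ d3 = d8) ∧ (d5 = d4 ∨ d5 = d8 ∨ d4 = d8) ∧ (d3 = d4 ∨ d3 = d8 ∨ d4 = d8))) ∧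
    (¬(((1 : Fin 5) = (2 : Fin 5) ∨ (1 : Fin 5) = d0 ∨ (2 : Fin 5) = d0) ∧ ((1 : Fin 5) = (2 : Fin 5) ∨ (1 : Fin 5) = d3 ∨ (2 : Fin 5) = d3) ∧ ((1 : Fin 5) = d0 ∨ (1 : Fin 5) = d3 ∨ d0 = d3) ∧ ((2 : Fin 5) = d0 ∨ (2 : Fin 5) = d3 ∨ d0 = d3))) ∧
    (¬(((1 : Fin 5) = (2 : Fin 5) ∨ (1 : Fin 5) = d0 ∨ (2 : Fin 5) = d0) ∧ ((1 : Fin 5) = (2 : Fin 5) ∨ (1 : Fin 5) = d4 ∨ (2 : Fin 5) = d4) ∧ ((1 : Fin 5) = d0 ∨ (1 : Fin 5) = d4 ∨ d0 = d4) ∧ ((2 : Fin 5) = d0 ∨ (2 : Fin 5) = d4 ∨ d0 = d4))) ∧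
    (¬(((1 : Fin 5) = d8 ∨ (1 : Fin 5) = d4 ∨ d8 = d4) ∧ ((1 : Fin 5) = d8 ∨ (1 : Fin 5) = d3 ∨ d8 = d3) ∧ ((1 : Fin 5) = d4 ∨ (1 : Fin 5) = d3 ∨ d4 = d3) ∧ (d8 = d4 ∨ d8 = d3 ∨ d4 = d3))) ∧
    (¬((d3 = d0 ∨ d3 = (0 : Fin 5) ∨ d0 = (0 : Fin 5)) ∧ (d3 = d0 ∨ d3 = (1 : Fin 5) ∨ d0 = (1 : Fin 5)) ∧ (d3 = (0 : Fin 5) ∨ d3 = (1 : Fin 5) ∨ (0 : Fin 5) = (1 : Fin 5)) ∧ (d0 = (0 : Fin 5) ∨ d0 = (1 : Fin 5) ∨ (0 : Fin 5) = (1 : Fin 5)))) ∧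
    (¬((d3 = d0 ∨ d3 = (2 : Fin 5) ∨ d0 = (2 : Fin 5)) ∧ (d3 = d0 ∨ d3 = d8 ∨ d0 = d8) ∧ (d3 = (2 : Fin 5) ∨ d3 = d8 ∨ (2 : Fin 5) = d8) ∧ (d0 = (2 : Fin 5) ∨ d0 = d8 ∨ (2 : Fin 5) = d8))) ∧
    (¬((d5 = (0 : Fin 5) ∨ d5 = d0 ∨ (0 : Fin 5) = d0) ∧ (d5 = (0 : Fin 5) ∨ d5 = d4 ∨ (0 : Fin 5) = d4) ∧ (d5 = d0 ∨ d5 = d4 ∨ d0 = d4) ∧ ((0 : Fin 5) = d0 ∨ (0 : Fin 5) = d4 ∨ d0 = d4))) ∧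
    (¬((d5 = (0 : Fin 5) ∨ d5 = (2 : Fin 5) ∨ (0 : Fin 5) = (2 : Fin 5)) ∧ (d5 = (0 : Fin 5) ∨ d5 = d8 ∨ (0 : Fin 5) = d8) ∧ (d5 = (2 : Fin 5) ∨ d5 = d8 ∨ (2 : Fin 5) = d8) ∧ ((0 : Fin 5) = (2 : Fin 5) ∨ (0 : Fin 5) = d8 ∨ (2 : Fin 5) = d8))) ∧
    (¬((d7 = d4 ∨ d7 = d0 ∨ d4 = d0) ∧ (d7 = d4 ∨ d7 = (2 : Fin 5) ∨ d4 = (2 : Fin 5)) ∧ (d7 = d0 ∨ d7 = (2 : Fin 5) ∨ d0 = (2 : Fin 5)) ∧ (d4 = d0 ∨ d4 = (2 : Fin 5) ∨ d0 = (2 : Fin 5)))) ∧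
    (¬(((2 : Fin 5) = d0 ∨ (2 : Fin 5) = d3 ∨ d0 = d3) ∧ ((2 : Fin 5) = d0 ∨ (2 : Fin 5) = d7 ∨ d0 = d7) ∧ ((2 : Fin 5) = d3 ∨ (2 : Fin 5) = d7 ∨ d3 = d7) ∧ (d0 = d3 ∨ d0 = d7 ∨ d3 = d7))) ∧
    (¬(((2 : Fin 5) = (0 : Fin 5) ∨ (2 : Fin 5) = d5 ∨ (0 : Fin 5) = d5) ∧ ((2 : Fin 5) = (0 : Fin 5) ∨ (2 : Fin 5) = d7 ∨ (0 : Fin 5) = d7) ∧ ((2 : Fin 5) = d5 ∨ (2 : Fin 5) = d7 ∨ d5 = d7) ∧ ((0 : Fin 5) = d5 ∨ (0 : Fin 5) = d7 ∨ d5 = d7))) ∧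
    (¬(((1 : Fin 5) = (0 : Fin 5) ∨ (1 : Fin 5) = d0 ∨ (0 : Fin 5) = d0) ∧ ((1 : Fin 5) = (0 : Fin 5) ∨ (1 : Fin 5) = d4 ∨ (0 : Fin 5) = d4) ∧ ((1 : Fin 5) = d0 ∨ (1 : Fin 5) = d4 ∨ d0 = d4) ∧ ((0 : Fin 5) = d0 ∨ (0 : Fin 5) = d4 ∨ d0 = d4))) ∧
    (¬(((1 : Fin 5) = d5 ∨ (1 : Fin 5) = d3 ∨ d5 = d3) ∧ ((1 : Fin 5) = d5 ∨ (1 : Fin 5) = d4 ∨ d5 = d4) ∧ ((1 : Fin 5) = d3 ∨ (1 : Fin 5) = d4 ∨ d3 = d4) ∧ (d5 = d3 ∨ d5 = d4 ∨ d3 = d4))) ∧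
    (¬((d0 = d3 ∨ d0 = d5 ∨ d3 = d5) ∧ (d0 = d3 ∨ d0 = (0 : Fin 5) ∨ d3 = (0 : Fin 5)) ∧ (d0 = d5 ∨ d0 = (0 : Fin 5) ∨ d5 = (0 : Fin 5)) ∧ (d3 = d5 ∨ d3 = (0 : Fin 5) ∨ d5 = (0 : Fin 5)))) ∧
    (¬((d0 = d4 ∨ d0 = d8 ∨ d4 = d8) ∧ (d0 = d4 ∨ d0 = (2 : Fin 5) ∨ d4 = (2 : Fin 5)) ∧ (d0 = d8 ∨ d0 = (2 : Fin 5) ∨ d8 = (2 : Fin 5)) ∧ (d4 = d8 ∨ d4 = (2 : Fin 5) ∨ d8 = (2 : Fin 5)))) ∧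
    (¬((d5 = d7 ∨ d5 = d8 ∨ d7 = d8) ∧ (d5 = d7 ∨ d5 = (1 : Fin 5) ∨ d7 = (1 : Fin 5)) ∧ (d5 = d8 ∨ d5 = (1 : Fin 5) ∨ d8 = (1 : Fin 5)) ∧ (d7 = d8 ∨ d7 = (1 : Fin 5) ∨ d8 = (1 : Fin 5))))) := by decide

lemma no5 : ¬ ∃ C : Sym2 V6 → Fin 5, IsStarEdgeColoring G6 C := by
  rintro ⟨C, hC⟩
  have hxy : C s(v00,v10) ≠ C s(v10,v20) := hC.1 s(v00,v10) (G6.mem_edgeSet.mpr (by decide)) s(v10,v20) (G6.mem_edgeSet.mpr (by decide)) (by decide) ⟨v10, by decide, by decide⟩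
  have hxz : C s(v00,v10) ≠ C s(v00,v20) := hC.1 s(v00,v10) (G6.mem_edgeSet.mpr (by decide)) s(v00,v20) (G6.mem_edgeSet.mpr (by decide)) (by decide) ⟨v00, by decide, by decide⟩
  have hyz : C s(v10,v20) ≠ C s(v00,v20) := hC.1 s(v10,v20) (G6.mem_edgeSet.mpr (by decide)) s(v00,v20) (G6.mem_edgeSet.mpr (by decide)) (by decide) ⟨v20, by decide, by decide⟩
  obtain ⟨f, hf, hf0, hf1, hf2⟩ := perm3 _ _ _ hxy hxz hyz
  have hD := star_map G6 C f hf hC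
  set D : Sym2 V6 → Fin 5 := fun e => f (C e) with hDdef
  have hd1 : D s(v00,v10) = 0 := hf0
  have hd6 : D s(v10,v20) = 1 := hf1
  have hd2 : D s(v00,v20) = 2 := hf2
  have ne_0_1 : D s(v00,v01) ≠ D s(v00,v10) := hD.1 s(v00,v01) (G6.mem_edgeSet.mpr (by decide)) s(v00,v10) (G6.mem_edgeSet.mpr (by decide)) (by decide) ⟨v00, by decide, by decide⟩
  rw [hd1] at ne_0_1
  have ne_0_2 : D s(v00,v01) ≠ D s(v00,v20) := hD.1 s(v00,v01) (G6.mem_edgeSet.mpr (by decide)) s(v00,v20) (G6.mem_edgeSet.mpr (by decide)) (by decide) ⟨v00, by decide, by decide⟩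
  rw [hd2] at ne_0_2
  have ne_0_3 : D s(v00,v01) ≠ D s(v01,v11) := hD.1 s(v00,v01) (G6.mem_edgeSet.mpr (by decide)) s(v01,v11) (G6.mem_edgeSet.mpr (by decide)) (by decide) ⟨v01, by decide, by decide⟩
  have ne_0_4 : D s(v00,v01) ≠ D s(v01,v21) := hD.1 s(v00,v01) (G6.mem_edgeSet.mpr (by decide)) s(v01,v21) (G6.mem_edgeSet.mpr (by decide)) (by decide) ⟨v01, by decide, by decide⟩
  have ne_1_2 : D s(v00,v10) ≠ D s(v00,v20) := hD.1 s(v00,v10) (G6.mem_edgeSet.mpr (by decide)) s(v00,v20) (G6.mem_edgeSet.mpr (by decide)) (by decide) ⟨v00, by decide, by decide⟩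
  rw [hd1, hd2] at ne_1_2
  have ne_1_5 : D s(v00,v10) ≠ D s(v10,v11) := hD.1 s(v00,v10) (G6.mem_edgeSet.mpr (by decide)) s(v10,v11) (G6.mem_edgeSet.mpr (by decide)) (by decide) ⟨v10, by decide, by decide⟩
  rw [hd1] at ne_1_5
  have ne_1_6 : D s(v00,v10) ≠ D s(v10,v20) := hD.1 s(v00,v10) (G6.mem_edgeSet.mpr (by decide)) s(v10,v20) (G6.mem_edgeSet.mpr (by decide)) (by decide) ⟨v10, by decide, by decide⟩
  rw [hd1, hd6] at ne_1_6
  have ne_2_6 : D s(v00,v20) ≠ D s(v10,v20) := hD.1 s(v00,v20) (G6.mem_edgeSet.mpr (by decide)) s(v10,v20) (G6.mem_edgeSet.mpr (by decide)) (by decide) ⟨v20, by decide, by decide⟩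
  rw [hd6, hd2] at ne_2_6
  have ne_2_8 : D s(v00,v20) ≠ D s(v20,v21) := hD.1 s(v00,v20) (G6.mem_edgeSet.mpr (by decide)) s(v20,v21) (G6.mem_edgeSet.mpr (by decide)) (by decide) ⟨v20, by decide, by decide⟩
  rw [hd2] at ne_2_8
  have ne_3_4 : D s(v01,v11) ≠ D s(v01,v21) := hD.1 s(v01,v11) (G6.mem_edgeSet.mpr (by decide)) s(v01,v21) (G6.mem_edgeSet.mpr (by decide)) (by decide) ⟨v01, by decide, by decide⟩
  have ne_3_5 : D s(v01,v11) ≠ D s(v10,v11) := hD.1 s(v01,v11) (G6.mem_edgeSet.mpr (by decide)) s(v10,v11) (G6.mem_edgeSet.mpr (by decide)) (by decide) ⟨v11, by decide, by decide⟩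
  have ne_3_7 : D s(v01,v11) ≠ D s(v11,v21) := hD.1 s(v01,v11) (G6.mem_edgeSet.mpr (by decide)) s(v11,v21) (G6.mem_edgeSet.mpr (by decide)) (by decide) ⟨v11, by decide, by decide⟩
  have ne_4_7 : D s(v01,v21) ≠ D s(v11,v21) := hD.1 s(v01,v21) (G6.mem_edgeSet.mpr (by decide)) s(v11,v21) (G6.mem_edgeSet.mpr (by decide)) (by decide) ⟨v21, by decide, by decide⟩
  have ne_4_8 : D s(v01,v21) ≠ D s(v20,v21) := hD.1 s(v01,v21) (G6.mem_edgeSet.mpr (by decide)) s(v20,v21) (G6.mem_edgeSet.mpr (by decide)) (by decide) ⟨v21, by decide, by decide⟩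
  have ne_5_6 : D s(v10,v11) ≠ D s(v10,v20) := hD.1 s(v10,v11) (G6.mem_edgeSet.mpr (by decide)) s(v10,v20) (G6.mem_edgeSet.mpr (by decide)) (by decide) ⟨v10, by decide, by decide⟩
  rw [hd6] at ne_5_6
  have ne_5_7 : D s(v10,v11) ≠ D s(v11,v21) := hD.1 s(v10,v11) (G6.mem_edgeSet.mpr (by decide)) s(v11,v21) (G6.mem_edgeSet.mpr (by decide)) (by decide) ⟨v11, by decide, by decide⟩
  have ne_6_8 : D s(v10,v20) ≠ D s(v20,v21) := hD.1 s(v10,v20) (G6.mem_edgeSet.mpr (by decide)) s(v20,v21) (G6.mem_edgeSet.mpr (by decide)) (by decide) ⟨v20, by decide, by decide⟩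
  rw [hd6] at ne_6_8
  have ne_7_8 : D s(v11,v21) ≠ D s(v20,v21) := hD.1 s(v11,v21) (G6.mem_edgeSet.mpr (by decide)) s(v20,v21) (G6.mem_edgeSet.mpr (by decide)) (by decide) ⟨v21, by decide, by decide⟩
  have hW0 := hD.2.1 _ _ (Walk.cons (show G6.Adj v00 v01 by decide) (Walk.cons (show G6.Adj v01 v11 by decide) (Walk.cons (show G6.Adj v11 v10 by decide) (Walk.cons (show G6.Adj v10 v20 by decide) Walk.nil)))) (by rfl) (by rw [Walk.isPath_def]; decide)
  have hB0 := not_bi_of_walk D s(v00,v01) s(v01,v11) s(v11,v10) s(v10,v20) hW0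
  rw [(Sym2.eq_swap : (s(v11,v10) : Sym2 V6) = s(v10,v11))] at hB0
  have q0 := fun h => hB0 ((bi_iff _ _ _ _).mpr h)
  rw [hd6] at q0
  have hW1 := hD.2.1 _ _ (Walk.cons (show G6.Adj v00 v01 by decide) (Walk.cons (show G6.Adj v01 v11 by decide) (Walk.cons (show G6.Adj v11 v21 by decide) (Walk.cons (show G6.Adj v21 v20 by decide) Walk.nil)))) (by rfl) (by rw [Walk.isPath_def]; decide)
  have hB1 := not_bi_of_walk D s(v00,v01) s(v01,v11) s(v11,v21) s(v21,v20) hW1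
  rw [(Sym2.eq_swap : (s(v21,v20) : Sym2 V6) = s(v20,v21))] at hB1
  have q1 := fun h => hB1 ((bi_iff _ _ _ _).mpr h)
  have hW2 := hD.2.1 _ _ (Walk.cons (show G6.Adj v00 v01 by decide) (Walk.cons (show G6.Adj v01 v21 by decide) (Walk.cons (show G6.Adj v21 v11 by decide) (Walk.cons (show G6.Adj v11 v10 by decide) Walk.nil)))) (by rfl) (by rw [Walk.isPath_def]; decide)
  have hB2 := not_bi_of_walk D s(v00,v01) s(v01,v21) s(v21,v11) s(v11,v10) hW2
  rw [(Sym2.eq_swap : (s(v21,v11) : Sym2 V6) = s(v11,v21))] at hB2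
  rw [(Sym2.eq_swap : (s(v11,v10) : Sym2 V6) = s(v10,v11))] at hB2
  have q2 := fun h => hB2 ((bi_iff _ _ _ _).mpr h)
  have hW3 := hD.2.1 _ _ (Walk.cons (show G6.Adj v00 v01 by decide) (Walk.cons (show G6.Adj v01 v21 by decide) (Walk.cons (show G6.Adj v21 v20 by decide) (Walk.cons (show G6.Adj v20 v10 by decide) Walk.nil)))) (by rfl) (by rw [Walk.isPath_def]; decide)
  have hB3 := not_bi_of_walk D s(v00,v01) s(v01,v21) s(v21,v20) s(v20,v10) hW3
  rw [(Sym2.eq_swap : (s(v21,v20) : Sym2 V6) = s(v20,v21))] at hB3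
  rw [(Sym2.eq_swap : (s(v20,v10) : Sym2 V6) = s(v10,v20))] at hB3
  have q3 := fun h => hB3 ((bi_iff _ _ _ _).mpr h)
  rw [hd6] at q3
  have hW4 := hD.2.1 _ _ (Walk.cons (show G6.Adj v00 v10 by decide) (Walk.cons (show G6.Adj v10 v11 by decide) (Walk.cons (show G6.Adj v11 v01 by decide) (Walk.cons (show G6.Adj v01 v21 by decide) Walk.nil)))) (by rfl) (by rw [Walk.isPath_def]; decide)
  have hB4 := not_bi_of_walk D s(v00,v10) s(v10,v11) s(v11,v01) s(v01,v21) hW4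
  rw [(Sym2.eq_swap : (s(v11,v01) : Sym2 V6) = s(v01,v11))] at hB4
  have q4 := fun h => hB4 ((bi_iff _ _ _ _).mpr h)
  rw [hd1] at q4
  have hW5 := hD.2.1 _ _ (Walk.cons (show G6.Adj v00 v10 by decide) (Walk.cons (show G6.Adj v10 v11 by decide) (Walk.cons (show G6.Adj v11 v21 by decide) (Walk.cons (show G6.Adj v21 v01 by decide) Walk.nil)))) (by rfl) (by rw [Walk.isPath_def]; decide)
  have hB5 := not_bi_of_walk D s(v00,v10) s(v10,v11) s(v11,v21) s(v21,v01) hW5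
  rw [(Sym2.eq_swap : (s(v21,v01) : Sym2 V6) = s(v01,v21))] at hB5
  have q5 := fun h => hB5 ((bi_iff _ _ _ _).mpr h)
  rw [hd1] at q5
  have hW6 := hD.2.1 _ _ (Walk.cons (show G6.Adj v00 v10 by decide) (Walk.cons (show G6.Adj v10 v11 by decide) (Walk.cons (show G6.Adj v11 v21 by decide) (Walk.cons (show G6.Adj v21 v20 by decide) Walk.nil)))) (by rfl) (by rw [Walk.isPath_def]; decide)
  have hB6 := not_bi_of_walk D s(v00,v10) s(v10,v11) s(v11,v21) s(v21,v20) hW6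
  rw [(Sym2.eq_swap : (s(v21,v20) : Sym2 V6) = s(v20,v21))] at hB6
  have q6 := fun h => hB6 ((bi_iff _ _ _ _).mpr h)
  rw [hd1] at q6
  have hW7 := hD.2.1 _ _ (Walk.cons (show G6.Adj v00 v10 by decide) (Walk.cons (show G6.Adj v10 v20 by decide) (Walk.cons (show G6.Adj v20 v21 by decide) (Walk.cons (show G6.Adj v21 v01 by decide) Walk.nil)))) (by rfl) (by rw [Walk.isPath_def]; decide)
  have hB7 := not_bi_of_walk D s(v00,v10) s(v10,v20) s(v20,v21) s(v21,v01) hW7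
  rw [(Sym2.eq_swap : (s(v21,v01) : Sym2 V6) = s(v01,v21))] at hB7
  have q7 := fun h => hB7 ((bi_iff _ _ _ _).mpr h)
  rw [hd1, hd6] at q7
  have hW8 := hD.2.1 _ _ (Walk.cons (show G6.Adj v00 v10 by decide) (Walk.cons (show G6.Adj v10 v20 by decide) (Walk.cons (show G6.Adj v20 v21 by decide) (Walk.cons (show G6.Adj v21 v11 by decide) Walk.nil)))) (by rfl) (by rw [Walk.isPath_def]; decide)
  have hB8 := not_bi_of_walk D s(v00,v10) s(v10,v20) s(v20,v21) s(v21,v11) hW8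
  rw [(Sym2.eq_swap : (s(v21,v11) : Sym2 V6) = s(v11,v21))] at hB8
  have q8 := fun h => hB8 ((bi_iff _ _ _ _).mpr h)
  rw [hd1, hd6] at q8
  have hW9 := hD.2.1 _ _ (Walk.cons (show G6.Adj v00 v20 by decide) (Walk.cons (show G6.Adj v20 v10 by decide) (Walk.cons (show G6.Adj v10 v11 by decide) (Walk.cons (show G6.Adj v11 v01 by decide) Walk.nil)))) (by rfl) (by rw [Walk.isPath_def]; decide)
  have hB9 := not_bi_of_walk D s(v00,v20) s(v20,v10) s(v10,v11) s(v11,v01) hW9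
  rw [(Sym2.eq_swap : (s(v20,v10) : Sym2 V6) = s(v10,v20))] at hB9
  rw [(Sym2.eq_swap : (s(v11,v01) : Sym2 V6) = s(v01,v11))] at hB9
  have q9 := fun h => hB9 ((bi_iff _ _ _ _).mpr h)
  rw [hd6, hd2] at q9
  have hW10 := hD.2.1 _ _ (Walk.cons (show G6.Adj v00 v20 by decide) (Walk.cons (show G6.Adj v20 v10 by decide) (Walk.cons (show G6.Adj v10 v11 by decide) (Walk.cons (show G6.Adj v11 v21 by decide) Walk.nil)))) (by rfl) (by rw [Walk.isPath_def]; decide)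
  have hB10 := not_bi_of_walk D s(v00,v20) s(v20,v10) s(v10,v11) s(v11,v21) hW10
  rw [(Sym2.eq_swap : (s(v20,v10) : Sym2 V6) = s(v10,v20))] at hB10
  have q10 := fun h => hB10 ((bi_iff _ _ _ _).mpr h)
  rw [hd6, hd2] at q10
  have hW11 := hD.2.1 _ _ (Walk.cons (show G6.Adj v00 v20 by decide) (Walk.cons (show G6.Adj v20 v21 by decide) (Walk.cons (show G6.Adj v21 v01 by decide) (Walk.cons (show G6.Adj v01 v11 by decide) Walk.nil)))) (by rfl) (by rw [Walk.isPath_def]; decide)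
  have hB11 := not_bi_of_walk D s(v00,v20) s(v20,v21) s(v21,v01) s(v01,v11) hW11
  rw [(Sym2.eq_swap : (s(v21,v01) : Sym2 V6) = s(v01,v21))] at hB11
  have q11 := fun h => hB11 ((bi_iff _ _ _ _).mpr h)
  rw [hd2] at q11
  have hW12 := hD.2.1 _ _ (Walk.cons (show G6.Adj v00 v20 by decide) (Walk.cons (show G6.Adj v20 v21 by decide) (Walk.cons (show G6.Adj v21 v11 by decide) (Walk.cons (show G6.Adj v11 v01 by decide) Walk.nil)))) (by rfl) (by rw [Walk.isPath_def]; decide)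
  have hB12 := not_bi_of_walk D s(v00,v20) s(v20,v21) s(v21,v11) s(v11,v01) hW12
  rw [(Sym2.eq_swap : (s(v21,v11) : Sym2 V6) = s(v11,v21))] at hB12
  rw [(Sym2.eq_swap : (s(v11,v01) : Sym2 V6) = s(v01,v11))] at hB12
  have q12 := fun h => hB12 ((bi_iff _ _ _ _).mpr h)
  rw [hd2] at q12
  have hW13 := hD.2.1 _ _ (Walk.cons (show G6.Adj v00 v20 by decide) (Walk.cons (show G6.Adj v20 v21 by decide) (Walk.cons (show G6.Adj v21 v11 by decide) (Walk.cons (show G6.Adj v11 v10 by decide) Walk.nil)))) (by rfl) (by rw [Walk.isPath_def]; decide)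
  have hB13 := not_bi_of_walk D s(v00,v20) s(v20,v21) s(v21,v11) s(v11,v10) hW13
  rw [(Sym2.eq_swap : (s(v21,v11) : Sym2 V6) = s(v11,v21))] at hB13
  rw [(Sym2.eq_swap : (s(v11,v10) : Sym2 V6) = s(v10,v11))] at hB13
  have q13 := fun h => hB13 ((bi_iff _ _ _ _).mpr h)
  rw [hd2] at q13
  have hW14 := hD.2.1 _ _ (Walk.cons (show G6.Adj v01 v00 by decide) (Walk.cons (show G6.Adj v00 v10 by decide) (Walk.cons (show G6.Adj v10 v11 by decide) (Walk.cons (show G6.Adj v11 v21 by decide) Walk.nil)))) (by rfl) (by rw [Walk.isPath_def]; decide)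
  have hB14 := not_bi_of_walk D s(v01,v00) s(v00,v10) s(v10,v11) s(v11,v21) hW14
  rw [(Sym2.eq_swap : (s(v01,v00) : Sym2 V6) = s(v00,v01))] at hB14
  have q14 := fun h => hB14 ((bi_iff _ _ _ _).mpr h)
  rw [hd1] at q14
  have hW15 := hD.2.1 _ _ (Walk.cons (show G6.Adj v01 v00 by decide) (Walk.cons (show G6.Adj v00 v10 by decide) (Walk.cons (show G6.Adj v10 v20 by decide) (Walk.cons (show G6.Adj v20 v21 by decide) Walk.nil)))) (by rfl) (by rw [Walk.isPath_def]; decide)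
  have hB15 := not_bi_of_walk D s(v01,v00) s(v00,v10) s(v10,v20) s(v20,v21) hW15
  rw [(Sym2.eq_swap : (s(v01,v00) : Sym2 V6) = s(v00,v01))] at hB15
  have q15 := fun h => hB15 ((bi_iff _ _ _ _).mpr h)
  rw [hd1, hd6] at q15
  have hW16 := hD.2.1 _ _ (Walk.cons (show G6.Adj v01 v00 by decide) (Walk.cons (show G6.Adj v00 v20 by decide) (Walk.cons (show G6.Adj v20 v10 by decide) (Walk.cons (show G6.Adj v10 v11 by decide) Walk.nil)))) (by rfl) (by rw [Walk.isPath_def]; decide)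
  have hB16 := not_bi_of_walk D s(v01,v00) s(v00,v20) s(v20,v10) s(v10,v11) hW16
  rw [(Sym2.eq_swap : (s(v01,v00) : Sym2 V6) = s(v00,v01))] at hB16
  rw [(Sym2.eq_swap : (s(v20,v10) : Sym2 V6) = s(v10,v20))] at hB16
  have q16 := fun h => hB16 ((bi_iff _ _ _ _).mpr h)
  rw [hd6, hd2] at q16
  have hW17 := hD.2.1 _ _ (Walk.cons (show G6.Adj v01 v00 by decide) (Walk.cons (show G6.Adj v00 v20 by decide) (Walk.cons (show G6.Adj v20 v21 by decide) (Walk.cons (show G6.Adj v21 v11 by decide) Walk.nil)))) (by rfl) (by rw [Walk.isPath_def]; decide)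
  have hB17 := not_bi_of_walk D s(v01,v00) s(v00,v20) s(v20,v21) s(v21,v11) hW17
  rw [(Sym2.eq_swap : (s(v01,v00) : Sym2 V6) = s(v00,v01))] at hB17
  rw [(Sym2.eq_swap : (s(v21,v11) : Sym2 V6) = s(v11,v21))] at hB17
  have q17 := fun h => hB17 ((bi_iff _ _ _ _).mpr h)
  rw [hd2] at q17
  have hW18 := hD.2.1 _ _ (Walk.cons (show G6.Adj v01 v11 by decide) (Walk.cons (show G6.Adj v11 v10 by decide) (Walk.cons (show G6.Adj v10 v00 by decide) (Walk.cons (show G6.Adj v00 v20 by decide) Walk.nil)))) (by rfl) (by rw [Walk.isPath_def]; decide)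
  have hB18 := not_bi_of_walk D s(v01,v11) s(v11,v10) s(v10,v00) s(v00,v20) hW18
  rw [(Sym2.eq_swap : (s(v11,v10) : Sym2 V6) = s(v10,v11))] at hB18
  rw [(Sym2.eq_swap : (s(v10,v00) : Sym2 V6) = s(v00,v10))] at hB18
  have q18 := fun h => hB18 ((bi_iff _ _ _ _).mpr h)
  rw [hd1, hd2] at q18
  have hW19 := hD.2.1 _ _ (Walk.cons (show G6.Adj v01 v11 by decide) (Walk.cons (show G6.Adj v11 v10 by decide) (Walk.cons (show G6.Adj v10 v20 by decide) (Walk.cons (show G6.Adj v20 v21 by decide) Walk.nil)))) (by rfl) (by rw [Walk.isPath_def]; decide)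
  have hB19 := not_bi_of_walk D s(v01,v11) s(v11,v10) s(v10,v20) s(v20,v21) hW19
  rw [(Sym2.eq_swap : (s(v11,v10) : Sym2 V6) = s(v10,v11))] at hB19
  have q19 := fun h => hB19 ((bi_iff _ _ _ _).mpr h)
  rw [hd6] at q19
  have hW20 := hD.2.1 _ _ (Walk.cons (show G6.Adj v01 v11 by decide) (Walk.cons (show G6.Adj v11 v21 by decide) (Walk.cons (show G6.Adj v21 v20 by decide) (Walk.cons (show G6.Adj v20 v10 by decide) Walk.nil)))) (by rfl) (by rw [Walk.isPath_def]; decide)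
  have hB20 := not_bi_of_walk D s(v01,v11) s(v11,v21) s(v21,v20) s(v20,v10) hW20
  rw [(Sym2.eq_swap : (s(v21,v20) : Sym2 V6) = s(v20,v21))] at hB20
  rw [(Sym2.eq_swap : (s(v20,v10) : Sym2 V6) = s(v10,v20))] at hB20
  have q20 := fun h => hB20 ((bi_iff _ _ _ _).mpr h)
  rw [hd6] at q20
  have hW21 := hD.2.1 _ _ (Walk.cons (show G6.Adj v01 v21 by decide) (Walk.cons (show G6.Adj v21 v11 by decide) (Walk.cons (show G6.Adj v11 v10 by decide) (Walk.cons (show G6.Adj v10 v20 by decide) Walk.nil)))) (by rfl) (by rw [Walk.isPath_def]; decide)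
  have hB21 := not_bi_of_walk D s(v01,v21) s(v21,v11) s(v11,v10) s(v10,v20) hW21
  rw [(Sym2.eq_swap : (s(v21,v11) : Sym2 V6) = s(v11,v21))] at hB21
  rw [(Sym2.eq_swap : (s(v11,v10) : Sym2 V6) = s(v10,v11))] at hB21
  have q21 := fun h => hB21 ((bi_iff _ _ _ _).mpr h)
  rw [hd6] at q21
  have hW22 := hD.2.1 _ _ (Walk.cons (show G6.Adj v01 v21 by decide) (Walk.cons (show G6.Adj v21 v20 by decide) (Walk.cons (show G6.Adj v20 v00 by decide) (Walk.cons (show G6.Adj v00 v10 by decide) Walk.nil)))) (by rfl) (by rw [Walk.isPath_def]; decide)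
  have hB22 := not_bi_of_walk D s(v01,v21) s(v21,v20) s(v20,v00) s(v00,v10) hW22
  rw [(Sym2.eq_swap : (s(v21,v20) : Sym2 V6) = s(v20,v21))] at hB22
  rw [(Sym2.eq_swap : (s(v20,v00) : Sym2 V6) = s(v00,v20))] at hB22
  have q22 := fun h => hB22 ((bi_iff _ _ _ _).mpr h)
  rw [hd1, hd2] at q22
  have hW23 := hD.2.1 _ _ (Walk.cons (show G6.Adj v01 v21 by decide) (Walk.cons (show G6.Adj v21 v20 by decide) (Walk.cons (show G6.Adj v20 v10 by decide) (Walk.cons (show G6.Adj v10 v11 by decide) Walk.nil)))) (by rfl) (by rw [Walk.isPath_def]; decide)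
  have hB23 := not_bi_of_walk D s(v01,v21) s(v21,v20) s(v20,v10) s(v10,v11) hW23
  rw [(Sym2.eq_swap : (s(v21,v20) : Sym2 V6) = s(v20,v21))] at hB23
  rw [(Sym2.eq_swap : (s(v20,v10) : Sym2 V6) = s(v10,v20))] at hB23
  have q23 := fun h => hB23 ((bi_iff _ _ _ _).mpr h)
  rw [hd6] at q23
  have hW24 := hD.2.1 _ _ (Walk.cons (show G6.Adj v10 v00 by decide) (Walk.cons (show G6.Adj v00 v01 by decide) (Walk.cons (show G6.Adj v01 v11 by decide) (Walk.cons (show G6.Adj v11 v21 by decide) Walk.nil)))) (by rfl) (by rw [Walk.isPath_def]; decide)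
  have hB24 := not_bi_of_walk D s(v10,v00) s(v00,v01) s(v01,v11) s(v11,v21) hW24
  rw [(Sym2.eq_swap : (s(v10,v00) : Sym2 V6) = s(v00,v10))] at hB24
  have q24 := fun h => hB24 ((bi_iff _ _ _ _).mpr h)
  rw [hd1] at q24
  have hW25 := hD.2.1 _ _ (Walk.cons (show G6.Adj v10 v00 by decide) (Walk.cons (show G6.Adj v00 v01 by decide) (Walk.cons (show G6.Adj v01 v21 by decide) (Walk.cons (show G6.Adj v21 v11 by decide) Walk.nil)))) (by rfl) (by rw [Walk.isPath_def]; decide)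
  have hB25 := not_bi_of_walk D s(v10,v00) s(v00,v01) s(v01,v21) s(v21,v11) hW25
  rw [(Sym2.eq_swap : (s(v10,v00) : Sym2 V6) = s(v00,v10))] at hB25
  rw [(Sym2.eq_swap : (s(v21,v11) : Sym2 V6) = s(v11,v21))] at hB25
  have q25 := fun h => hB25 ((bi_iff _ _ _ _).mpr h)
  rw [hd1] at q25
  have hW26 := hD.2.1 _ _ (Walk.cons (show G6.Adj v10 v00 by decide) (Walk.cons (show G6.Adj v00 v01 by decide) (Walk.cons (show G6.Adj v01 v21 by decide) (Walk.cons (show G6.Adj v21 v20 by decide) Walk.nil)))) (by rfl) (by rw [Walk.isPath_def]; decide)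
  have hB26 := not_bi_of_walk D s(v10,v00) s(v00,v01) s(v01,v21) s(v21,v20) hW26
  rw [(Sym2.eq_swap : (s(v10,v00) : Sym2 V6) = s(v00,v10))] at hB26
  rw [(Sym2.eq_swap : (s(v21,v20) : Sym2 V6) = s(v20,v21))] at hB26
  have q26 := fun h => hB26 ((bi_iff _ _ _ _).mpr h)
  rw [hd1] at q26
  have hW27 := hD.2.1 _ _ (Walk.cons (show G6.Adj v10 v00 by decide) (Walk.cons (show G6.Adj v00 v20 by decide) (Walk.cons (show G6.Adj v20 v21 by decide) (Walk.cons (show G6.Adj v21 v11 by decide) Walk.nil)))) (by rfl) (by rw [Walk.isPath_def]; decide)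
  have hB27 := not_bi_of_walk D s(v10,v00) s(v00,v20) s(v20,v21) s(v21,v11) hW27
  rw [(Sym2.eq_swap : (s(v10,v00) : Sym2 V6) = s(v00,v10))] at hB27
  rw [(Sym2.eq_swap : (s(v21,v11) : Sym2 V6) = s(v11,v21))] at hB27
  have q27 := fun h => hB27 ((bi_iff _ _ _ _).mpr h)
  rw [hd1, hd2] at q27
  have hW28 := hD.2.1 _ _ (Walk.cons (show G6.Adj v10 v11 by decide) (Walk.cons (show G6.Adj v11 v01 by decide) (Walk.cons (show G6.Adj v01 v00 by decide) (Walk.cons (show G6.Adj v00 v20 by decide) Walk.nil)))) (by rfl) (by rw [Walk.isPath_def]; decide)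
  have hB28 := not_bi_of_walk D s(v10,v11) s(v11,v01) s(v01,v00) s(v00,v20) hW28
  rw [(Sym2.eq_swap : (s(v11,v01) : Sym2 V6) = s(v01,v11))] at hB28
  rw [(Sym2.eq_swap : (s(v01,v00) : Sym2 V6) = s(v00,v01))] at hB28
  have q28 := fun h => hB28 ((bi_iff _ _ _ _).mpr h)
  rw [hd2] at q28
  have hW29 := hD.2.1 _ _ (Walk.cons (show G6.Adj v10 v11 by decide) (Walk.cons (show G6.Adj v11 v01 by decide) (Walk.cons (show G6.Adj v01 v21 by decide) (Walk.cons (show G6.Adj v21 v20 by decide) Walk.nil)))) (by rfl) (by rw [Walk.isPath_def]; decide)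
  have hB29 := not_bi_of_walk D s(v10,v11) s(v11,v01) s(v01,v21) s(v21,v20) hW29
  rw [(Sym2.eq_swap : (s(v11,v01) : Sym2 V6) = s(v01,v11))] at hB29
  rw [(Sym2.eq_swap : (s(v21,v20) : Sym2 V6) = s(v20,v21))] at hB29
  have q29 := fun h => hB29 ((bi_iff _ _ _ _).mpr h)
  have hW30 := hD.2.1 _ _ (Walk.cons (show G6.Adj v10 v20 by decide) (Walk.cons (show G6.Adj v20 v00 by decide) (Walk.cons (show G6.Adj v00 v01 by decide) (Walk.cons (show G6.Adj v01 v11 by decide) Walk.nil)))) (by rfl) (by rw [Walk.isPath_def]; decide)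
  have hB30 := not_bi_of_walk D s(v10,v20) s(v20,v00) s(v00,v01) s(v01,v11) hW30
  rw [(Sym2.eq_swap : (s(v20,v00) : Sym2 V6) = s(v00,v20))] at hB30
  have q30 := fun h => hB30 ((bi_iff _ _ _ _).mpr h)
  rw [hd6, hd2] at q30
  have hW31 := hD.2.1 _ _ (Walk.cons (show G6.Adj v10 v20 by decide) (Walk.cons (show G6.Adj v20 v00 by decide) (Walk.cons (show G6.Adj v00 v01 by decide) (Walk.cons (show G6.Adj v01 v21 by decide) Walk.nil)))) (by rfl) (by rw [Walk.isPath_def]; decide)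
  have hB31 := not_bi_of_walk D s(v10,v20) s(v20,v00) s(v00,v01) s(v01,v21) hW31
  rw [(Sym2.eq_swap : (s(v20,v00) : Sym2 V6) = s(v00,v20))] at hB31
  have q31 := fun h => hB31 ((bi_iff _ _ _ _).mpr h)
  rw [hd6, hd2] at q31
  have hW32 := hD.2.1 _ _ (Walk.cons (show G6.Adj v10 v20 by decide) (Walk.cons (show G6.Adj v20 v21 by decide) (Walk.cons (show G6.Adj v21 v01 by decide) (Walk.cons (show G6.Adj v01 v11 by decide) Walk.nil)))) (by rfl) (by rw [Walk.isPath_def]; decide)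
  have hB32 := not_bi_of_walk D s(v10,v20) s(v20,v21) s(v21,v01) s(v01,v11) hW32
  rw [(Sym2.eq_swap : (s(v21,v01) : Sym2 V6) = s(v01,v21))] at hB32
  have q32 := fun h => hB32 ((bi_iff _ _ _ _).mpr h)
  rw [hd6] at q32
  have hW33 := hD.2.1 _ _ (Walk.cons (show G6.Adj v11 v01 by decide) (Walk.cons (show G6.Adj v01 v00 by decide) (Walk.cons (show G6.Adj v00 v10 by decide) (Walk.cons (show G6.Adj v10 v20 by decide) Walk.nil)))) (by rfl) (by rw [Walk.isPath_def]; decide)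
  have hB33 := not_bi_of_walk D s(v11,v01) s(v01,v00) s(v00,v10) s(v10,v20) hW33
  rw [(Sym2.eq_swap : (s(v11,v01) : Sym2 V6) = s(v01,v11))] at hB33
  rw [(Sym2.eq_swap : (s(v01,v00) : Sym2 V6) = s(v00,v01))] at hB33
  have q33 := fun h => hB33 ((bi_iff _ _ _ _).mpr h)
  rw [hd1, hd6] at q33
  have hW34 := hD.2.1 _ _ (Walk.cons (show G6.Adj v11 v01 by decide) (Walk.cons (show G6.Adj v01 v00 by decide) (Walk.cons (show G6.Adj v00 v20 by decide) (Walk.cons (show G6.Adj v20 v21 by decide) Walk.nil)))) (by rfl) (by rw [Walk.isPath_def]; decide)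
  have hB34 := not_bi_of_walk D s(v11,v01) s(v01,v00) s(v00,v20) s(v20,v21) hW34
  rw [(Sym2.eq_swap : (s(v11,v01) : Sym2 V6) = s(v01,v11))] at hB34
  rw [(Sym2.eq_swap : (s(v01,v00) : Sym2 V6) = s(v00,v01))] at hB34
  have q34 := fun h => hB34 ((bi_iff _ _ _ _).mpr h)
  rw [hd2] at q34
  have hW35 := hD.2.1 _ _ (Walk.cons (show G6.Adj v11 v10 by decide) (Walk.cons (show G6.Adj v10 v00 by decide) (Walk.cons (show G6.Adj v00 v01 by decide) (Walk.cons (show G6.Adj v01 v21 by decide) Walk.nil)))) (by rfl) (by rw [Walk.isPath_def]; decide)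
  have hB35 := not_bi_of_walk D s(v11,v10) s(v10,v00) s(v00,v01) s(v01,v21) hW35
  rw [(Sym2.eq_swap : (s(v11,v10) : Sym2 V6) = s(v10,v11))] at hB35
  rw [(Sym2.eq_swap : (s(v10,v00) : Sym2 V6) = s(v00,v10))] at hB35
  have q35 := fun h => hB35 ((bi_iff _ _ _ _).mpr h)
  rw [hd1] at q35
  have hW36 := hD.2.1 _ _ (Walk.cons (show G6.Adj v11 v10 by decide) (Walk.cons (show G6.Adj v10 v00 by decide) (Walk.cons (show G6.Adj v00 v20 by decide) (Walk.cons (show G6.Adj v20 v21 by decide) Walk.nil)))) (by rfl) (by rw [Walk.isPath_def]; decide)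
  have hB36 := not_bi_of_walk D s(v11,v10) s(v10,v00) s(v00,v20) s(v20,v21) hW36
  rw [(Sym2.eq_swap : (s(v11,v10) : Sym2 V6) = s(v10,v11))] at hB36
  rw [(Sym2.eq_swap : (s(v10,v00) : Sym2 V6) = s(v00,v10))] at hB36
  have q36 := fun h => hB36 ((bi_iff _ _ _ _).mpr h)
  rw [hd1, hd2] at q36
  have hW37 := hD.2.1 _ _ (Walk.cons (show G6.Adj v11 v21 by decide) (Walk.cons (show G6.Adj v21 v01 by decide) (Walk.cons (show G6.Adj v01 v00 by decide) (Walk.cons (show G6.Adj v00 v20 by decide) Walk.nil)))) (by rfl) (by rw [Walk.isPath_def]; decide)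
  have hB37 := not_bi_of_walk D s(v11,v21) s(v21,v01) s(v01,v00) s(v00,v20) hW37
  rw [(Sym2.eq_swap : (s(v21,v01) : Sym2 V6) = s(v01,v21))] at hB37
  rw [(Sym2.eq_swap : (s(v01,v00) : Sym2 V6) = s(v00,v01))] at hB37
  have q37 := fun h => hB37 ((bi_iff _ _ _ _).mpr h)
  rw [hd2] at q37
  have hW38 := hD.2.1 _ _ (Walk.cons (show G6.Adj v20 v00 by decide) (Walk.cons (show G6.Adj v00 v01 by decide) (Walk.cons (show G6.Adj v01 v11 by decide) (Walk.cons (show G6.Adj v11 v21 by decide) Walk.nil)))) (by rfl) (by rw [Walk.isPath_def]; decide)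
  have hB38 := not_bi_of_walk D s(v20,v00) s(v00,v01) s(v01,v11) s(v11,v21) hW38
  rw [(Sym2.eq_swap : (s(v20,v00) : Sym2 V6) = s(v00,v20))] at hB38
  have q38 := fun h => hB38 ((bi_iff _ _ _ _).mpr h)
  rw [hd2] at q38
  have hW39 := hD.2.1 _ _ (Walk.cons (show G6.Adj v20 v00 by decide) (Walk.cons (show G6.Adj v00 v10 by decide) (Walk.cons (show G6.Adj v10 v11 by decide) (Walk.cons (show G6.Adj v11 v21 by decide) Walk.nil)))) (by rfl) (by rw [Walk.isPath_def]; decide)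
  have hB39 := not_bi_of_walk D s(v20,v00) s(v00,v10) s(v10,v11) s(v11,v21) hW39
  rw [(Sym2.eq_swap : (s(v20,v00) : Sym2 V6) = s(v00,v20))] at hB39
  have q39 := fun h => hB39 ((bi_iff _ _ _ _).mpr h)
  rw [hd1, hd2] at q39
  have hW40 := hD.2.1 _ _ (Walk.cons (show G6.Adj v20 v10 by decide) (Walk.cons (show G6.Adj v10 v00 by decide) (Walk.cons (show G6.Adj v00 v01 by decide) (Walk.cons (show G6.Adj v01 v21 by decide) Walk.nil)))) (by rfl) (by rw [Walk.isPath_def]; decide)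
  have hB40 := not_bi_of_walk D s(v20,v10) s(v10,v00) s(v00,v01) s(v01,v21) hW40
  rw [(Sym2.eq_swap : (s(v20,v10) : Sym2 V6) = s(v10,v20))] at hB40
  rw [(Sym2.eq_swap : (s(v10,v00) : Sym2 V6) = s(v00,v10))] at hB40
  have q40 := fun h => hB40 ((bi_iff _ _ _ _).mpr h)
  rw [hd1, hd6] at q40
  have hW41 := hD.2.1 _ _ (Walk.cons (show G6.Adj v20 v10 by decide) (Walk.cons (show G6.Adj v10 v11 by decide) (Walk.cons (show G6.Adj v11 v01 by decide) (Walk.cons (show G6.Adj v01 v21 by decide) Walk.nil)))) (by rfl) (by rw [Walk.isPath_def]; decide)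
  have hB41 := not_bi_of_walk D s(v20,v10) s(v10,v11) s(v11,v01) s(v01,v21) hW41
  rw [(Sym2.eq_swap : (s(v20,v10) : Sym2 V6) = s(v10,v20))] at hB41
  rw [(Sym2.eq_swap : (s(v11,v01) : Sym2 V6) = s(v01,v11))] at hB41
  have q41 := fun h => hB41 ((bi_iff _ _ _ _).mpr h)
  rw [hd6] at q41
  have hW42 := hD.2.2 _ (Walk.cons (show G6.Adj v00 v01 by decide) (Walk.cons (show G6.Adj v01 v11 by decide) (Walk.cons (show G6.Adj v11 v10 by decide) (Walk.cons (show G6.Adj v10 v00 by decide) Walk.nil)))) (by rfl) (⟨⟨⟨by decide⟩, by simp⟩, by decide⟩)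
  have hB42 := not_bi_of_walk D s(v00,v01) s(v01,v11) s(v11,v10) s(v10,v00) hW42
  rw [(Sym2.eq_swap : (s(v11,v10) : Sym2 V6) = s(v10,v11))] at hB42
  rw [(Sym2.eq_swap : (s(v10,v00) : Sym2 V6) = s(v00,v10))] at hB42
  have q42 := fun h => hB42 ((bi_iff _ _ _ _).mpr h)
  rw [hd1] at q42
  have hW43 := hD.2.2 _ (Walk.cons (show G6.Adj v00 v01 by decide) (Walk.cons (show G6.Adj v01 v21 by decide) (Walk.cons (show G6.Adj v21 v20 by decide) (Walk.cons (show G6.Adj v20 v00 by decide) Walk.nil)))) (by rfl) (⟨⟨⟨by decide⟩, by simp⟩, by decide⟩)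
  have hB43 := not_bi_of_walk D s(v00,v01) s(v01,v21) s(v21,v20) s(v20,v00) hW43
  rw [(Sym2.eq_swap : (s(v21,v20) : Sym2 V6) = s(v20,v21))] at hB43
  rw [(Sym2.eq_swap : (s(v20,v00) : Sym2 V6) = s(v00,v20))] at hB43
  have q43 := fun h => hB43 ((bi_iff _ _ _ _).mpr h)
  rw [hd2] at q43
  have hW44 := hD.2.2 _ (Walk.cons (show G6.Adj v10 v11 by decide) (Walk.cons (show G6.Adj v11 v21 by decide) (Walk.cons (show G6.Adj v21 v20 by decide) (Walk.cons (show G6.Adj v20 v10 by decide) Walk.nil)))) (by rfl) (⟨⟨⟨by decide⟩, by simp⟩, by decide⟩)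
  have hB44 := not_bi_of_walk D s(v10,v11) s(v11,v21) s(v21,v20) s(v20,v10) hW44
  rw [(Sym2.eq_swap : (s(v21,v20) : Sym2 V6) = s(v20,v21))] at hB44
  rw [(Sym2.eq_swap : (s(v20,v10) : Sym2 V6) = s(v10,v20))] at hB44
  have q44 := fun h => hB44 ((bi_iff _ _ _ _).mpr h)
  rw [hd6] at q44
  exact unsat (D s(v00,v01)) (D s(v01,v11)) (D s(v01,v21)) (D s(v10,v11)) (D s(v11,v21)) (D s(v20,v21)) ⟨ne_0_1, ne_0_2, ne_0_3, ne_0_4, ne_1_2, ne_1_5, ne_1_6, ne_2_6, ne_2_8, ne_3_4, ne_3_5, ne_3_7, ne_4_7, ne_4_8, ne_5_6, ne_5_7, ne_6_8, ne_7_8, q0, q1, q2, q3, q4, q5, q6, q7, q8, q9, q10, q11, q12, q13, q14, q15, q16, q17, q18, q19, q20, q21, q22, q23, q24, q25, q26, q27, q28, q29, q30, q31, q32, q33, q34, q35, q36, q37, q38, q39, q40, q41, q42, q43, q44⟩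

def ctbl : ℕ → ℕ → Fin 6
  | 0, 1 => 1
  | 0, 2 => 2
  | 0, 3 => 0
  | 1, 0 => 1
  | 1, 2 => 4
  | 1, 4 => 3
  | 2, 0 => 2
  | 2, 1 => 4
  | 2, 5 => 5
  | 3, 0 => 0
  | 3, 4 => 1
  | 3, 5 => 2
  | 4, 1 => 3
  | 4, 3 => 1
  | 4, 5 => 4
  | 5, 2 => 5
  | 5, 3 => 2
  | 5, 4 => 4
  | _, _ => 0

def C6 : Sym2 V6 → Fin 6 :=
  Sym2.lift ⟨fun x y => ctbl (x.1.val + 3 * x.2.val) (y.1.val + 3 * y.2.val), by decide⟩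

set_option maxHeartbeats 16000000 in
set_option maxRecDepth 10000 in
set_option synthInstance.maxHeartbeats 4000000 in
set_option synthInstance.maxSize 20000 in
lemma star6 : IsStarEdgeColoring G6 C6 := by
  refine isStar_of_finite C6 ?_ ?_ ?_ <;> decide

theorem stmt_8 : starChromaticIndex (cycleGraph 3 □ pathGraph 2) = 6 := by
  have h6 : 6 ∈ {k | ∃ C : Sym2 V6 → Fin k, IsStarEdgeColoring G6 C} := ⟨C6, star6⟩
  refine le_antisymm (Nat.sInf_le h6) ?_
  apply le_csInf ⟨6, h6⟩
  rintro k ⟨C, hC⟩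
  by_contra hlt
  push_neg at hlt
  have hk5 : k ≤ 5 := by omega
  exact no5 ⟨fun e => Fin.castLE hk5 (C e), star_map G6 C _ (Fin.castLE_injective hk5) hC⟩
end
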